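/- Lemma 6 (Projected dual ascent controls the fictitious dual term): Let K ∈ ℕ, χ > 0, α > 0, H > 0, b ∈ ℝ, and real sequences (u_t)_{t=1}^K, (v_t)_{t=1}^K with b ≤ u_t and (b − v_t)² ≤ H² for all t ∈ [K]. Define Y_1 = 0 and Y_{t+1} = Proj_{[0,χ]}(Y_t + α·(b − v_t)) for t = 1,…,K. Then −Σ_{t=1}^K Y_t·(u_t − v_t) ≤ α·H²·K/2; in particular, with α = 1/sqrt(K) the bound equals H²·sqrt(K)/2. -/
import Mathlib


/-!
Lemma 6 (Projected dual ascent controls the fictitious dual term).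
`Proj_{[0,χ]} x = max 0 (min χ x)`.  `Y 1 = 0`, `Y (t+1) = Proj_{[0,χ]}(Y t + α (b - v t))`.
If `b ≤ u t` and `(b - v t)² ≤ H²` for all `t ∈ [K]`, then
`-∑_{t=1}^K Y t * (u t - v t) ≤ α H² K / 2`; in particular for `α = 1/√K` the bound
equals `H² √K / 2`.
-/
theorem projected_dual_ascent_bound
    (K : ℕ) (χ α H b : ℝ) (hχ : 0 < χ) (hα : 0 < α) (hH : 0 < H)
    (u v : ℕ → ℝ)
    (hu : ∀ t ∈ Finset.Icc 1 K, b ≤ u t)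
    (hv : ∀ t ∈ Finset.Icc 1 K, (b - v t) ^ 2 ≤ H ^ 2)
    (Y : ℕ → ℝ) (hY1 : Y 1 = 0)
    (hYrec : ∀ t ∈ Finset.Icc 1 K, Y (t + 1) = max 0 (min χ (Y t + α * (b - v t)))) :
    (-∑ t ∈ Finset.Icc 1 K, Y t * (u t - v t) ≤ α * H ^ 2 * K / 2) ∧
      (α = 1 / Real.sqrt K → α * H ^ 2 * K / 2 = H ^ 2 * Real.sqrt K / 2) := by
  constructor
  · -- nonnegativity of Y on [1, K+1]
    have hYnn : ∀ t, 1 ≤ t → t ≤ K → 0 ≤ Y t := by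
      intro t ht1 htK
      rcases Nat.exists_eq_add_of_le ht1 with ⟨s, rfl⟩
      induction s with
      | zero => simp [hY1]
      | succ n ih =>
        have hmem : 1 + n ∈ Finset.Icc 1 K := by
          simp only [Finset.mem_Icc]; omega
        have := hYrec (1 + n) hmem
        rw [show 1 + (n + 1) = 1 + n + 1 by ring, this]
        exact le_max_left _ _
    -- per-term inequality
    have key : ∀ t ∈ Finset.Icc 1 K,
        -(Y t * (u t - v t)) ≤ (Y t ^ 2 - Y (t + 1) ^ 2) / (2 * α) + α * H ^ 2 / 2 := by
      intro t ht
      simp only [Finset.mem_Icc] at ht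
      have hYt : 0 ≤ Y t := hYnn t ht.1 ht.2
      have hub : b ≤ u t := hu t (by simp [Finset.mem_Icc, ht.1, ht.2])
      have hvt : (b - v t) ^ 2 ≤ H ^ 2 := hv t (by simp [Finset.mem_Icc, ht.1, ht.2])
      have hrec := hYrec t (by simp [Finset.mem_Icc, ht.1, ht.2])
      set x := Y t + α * (b - v t) with hx
      have hsq : Y (t + 1) ^ 2 ≤ x ^ 2 := by
        rw [hrec]
        rcases le_total x 0 with h | h
        · rw [min_eq_right (h.trans hχ.le), max_eq_left h]
          simpa using sq_nonneg x
        · rcases le_total χ x with h2 | h2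
          · rw [min_eq_left h2, max_eq_right hχ.le]
            nlinarith
          · rw [min_eq_right h2, max_eq_right h]
      have hexp : x ^ 2 = Y t ^ 2 + 2 * α * (Y t * (b - v t)) + α ^ 2 * (b - v t) ^ 2 := by
        rw [hx]; ring
      have h1 : -(Y t * (b - v t)) ≤ (Y t ^ 2 - Y (t + 1) ^ 2) / (2 * α) + α * H ^ 2 / 2 := by
        rw [div_add_div _ _ (by positivity : (2 * α : ℝ) ≠ 0) (by norm_num : (2 : ℝ) ≠ 0),
          le_div_iff₀ (by positivity)]
        nlinarith [hsq, hexp, sq_nonneg α]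
      have h2 : -(Y t * (u t - v t)) ≤ -(Y t * (b - v t)) := by
        nlinarith
      linarith
    have hsum : -∑ t ∈ Finset.Icc 1 K, Y t * (u t - v t)
        ≤ ∑ t ∈ Finset.Icc 1 K, ((Y t ^ 2 - Y (t + 1) ^ 2) / (2 * α) + α * H ^ 2 / 2) := by
      rw [← Finset.sum_neg_distrib]
      exact Finset.sum_le_sum key
    have htel : ∑ t ∈ Finset.Icc 1 K, (Y t ^ 2 - Y (t + 1) ^ 2)
        = Y 1 ^ 2 - Y (K + 1) ^ 2 := by
      rw [show Finset.Icc 1 K = Finset.Ico 1 (K + 1) by rw [Finset.Ico_add_one_right_eq_Icc],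
        Finset.sum_Ico_eq_sum_range]
      simp only [Nat.add_sub_cancel]
      have : ∀ i ∈ Finset.range K, Y (1 + i) ^ 2 - Y (1 + i + 1) ^ 2
          = (fun i => Y (i + 1) ^ 2) i - (fun i => Y (i + 1) ^ 2) (i + 1) := by
        intro i _; simp [add_comm]
      rw [Finset.sum_congr rfl this, Finset.sum_range_sub']
    rw [Finset.sum_add_distrib, ← Finset.sum_div, htel] at hsum
    simp only [Finset.sum_const, Nat.card_Icc, nsmul_eq_mul] at hsum
    have hYK1 : 0 ≤ Y (K + 1) ^ 2 := sq_nonneg _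
    have : (↑(K + 1 - 1) : ℝ) = K := by
      congr 1
    rw [this] at hsum
    calc -∑ t ∈ Finset.Icc 1 K, Y t * (u t - v t)
        ≤ (Y 1 ^ 2 - Y (K + 1) ^ 2) / (2 * α) + ↑K * (α * H ^ 2 / 2) := hsum
      _ ≤ α * H ^ 2 * K / 2 := by
          rw [hY1]
          have : (0 ^ 2 - Y (K + 1) ^ 2) / (2 * α) ≤ 0 := by
            apply div_nonpos_of_nonpos_of_nonneg
            · nlinarith
            · positivity
          linarith
  · intro hαeq
    rcases Nat.eq_zero_or_pos K with rfl | hK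
    · simp
    · have hsK : (0 : ℝ) < Real.sqrt K := Real.sqrt_pos.mpr (by exact_mod_cast hK)
      rw [hαeq]
      field_simp
      have h : Real.sqrt ↑K * Real.sqrt ↑K = (K : ℝ) := Real.mul_self_sqrt (by positivity)
      nlinarith [h]
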